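/- Let n ≥ 2, k ≥ 2, 2 ≤ s ≤ n and k+2 ≤ d ≤ 2k be integers, and assume C(d+n,n) ≤ s·(C(k+n,n)+n). Then for all linearly independent linear forms L_1,…,L_s ∈ R_1 and all F_1,…,F_s ∈ R_k, the sum W(L_1,F_1;d)+…+W(L_s,F_s;d) is contained in the degree-d part of the ideal (L_1,…,L_s), and therefore dim_K(W(L_1,F_1;d)+…+W(L_s,F_s;d)) ≤ C(d+n,n) − C(n−s+d, d); in particular the sum never equals R_d, so the s-th secant of the k-th osculating variety is defective with defect at least C(n−s+d,d). -/

import Mathlib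

open MvPolynomial

/-- `G·V`, the image of the subspace `V` under multiplication by `G`. -/
noncomputable def mulSub {K : Type*} [Field K] {σ : Type*} (G : MvPolynomial σ K)
    (V : Submodule K (MvPolynomial σ K)) : Submodule K (MvPolynomial σ K) :=
  V.map (LinearMap.mulLeft K G)

/-- `W(L,F;d) = L^{d-k}·R_k + L^{d-k-1}·F·R_1`, the affine cone over the tangent space
to the k-th osculating variety of the d-uple Veronese at the point `L^{d-k}F`. -/
noncomputable def Wspace {K : Type*} [Field K] {σ : Type*} (k d : ℕ)
    (L F : MvPolynomial σ K) : Submodule K (MvPolynomial σ K) :=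
  mulSub (L ^ (d - k)) (homogeneousSubmodule σ K k) ⊔
    mulSub (L ^ (d - k - 1) * F) (homogeneousSubmodule σ K 1)

/-- the apolarity pairing `φ(f,g) = Σ_I f_I g_I`. -/
noncomputable def apol {K : Type*} [Field K] {σ : Type*} (f g : MvPolynomial σ K) : K :=
  ∑ I ∈ f.support, f.coeff I * g.coeff I

/-- the perpendicular of a set of forms, inside `R_d`, w.r.t. the apolarity pairing -/
def perpSet {K : Type*} [Field K] {σ : Type*} (d : ℕ) (V : Set (MvPolynomial σ K)) :
    Set (MvPolynomial σ K) :=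
  {f | f ∈ homogeneousSubmodule σ K d ∧ ∀ v ∈ V, apol f v = 0}

/-! Since `d - k - 1 ≥ 1`, both generators of `W(L_i,F_i;d)` are multiples of `L_i`, so the sum
lies in `R_d ∩ (L_1,…,L_s)`. A linear map from `R_1` onto the linear forms in `n + 1 - s` new
variables that vanishes on the independent forms `L_i` extends, by substitution of the variables,
to an algebra map `π` that kills the ideal `(L_1,…,L_s)`. As `R_d = R_1 ^ d`, `π` maps `R_d` onto
the degree-`d` forms in `n + 1 - s` variables, a space of dimension `C(n-s+d,d)`, and rank-nullity
for `π` restricted to `R_d` gives the bound. -/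

open Module Submodule

theorem Submodule.exists_surjective_le_ker {K V W : Type*} [Field K] [AddCommGroup V]
    [Module K V] [FiniteDimensional K V] [AddCommGroup W] [Module K W] [FiniteDimensional K W]
    (U : Submodule K V) (h : finrank K U + finrank K W = finrank K V) :
    ∃ f : V →ₗ[K] W, Function.Surjective f ∧ U ≤ LinearMap.ker f := by
  let e : (V ⧸ U) ≃ₗ[K] W := LinearEquiv.ofFinrankEq _ _ (by rw [U.finrank_quotient]; omega)
  refine ⟨e.toLinearMap ∘ₗ U.mkQ, e.surjective.comp U.mkQ_surjective, ?_⟩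
  rw [LinearEquiv.ker_comp, ker_mkQ]

theorem Submodule.finrank_le_finrank_sub_finrank_map {K V W : Type*} [Field K] [AddCommGroup V]
    [Module K V] [AddCommGroup W] [Module K W] (f : V →ₗ[K] W) {P M : Submodule K V}
    [FiniteDimensional K P] (hMP : M ≤ P) (hMf : M ≤ LinearMap.ker f) :
    finrank K M ≤ finrank K P - finrank K (P.map f) := by
  have hrank := LinearMap.finrank_range_add_finrank_ker (f.domRestrict P)
  rw [LinearMap.range_domRestrict, LinearMap.ker_domRestrict] at hrank
  have hle : finrank K M ≤ finrank K ((LinearMap.ker f).comap P.subtype) := by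
    rw [← (comapSubtypeEquivOfLe hMP).finrank_eq]
    exact finrank_mono (comap_mono hMf)
  omega

namespace MvPolynomial

variable {σ K : Type*} [Field K]

instance [Finite σ] (d : ℕ) : FiniteDimensional K (homogeneousSubmodule σ K d) :=
  Module.Finite.iff_fg.mpr (homogeneousSubmodule_fg σ K d)

theorem finrank_homogeneousSubmodule [Fintype σ] (d : ℕ) :
    finrank K (homogeneousSubmodule σ K d) = (Fintype.card σ + d - 1).choose d := by
  classical
  have hdeg : {m : σ →₀ ℕ | m.degree = d} =
      ((Finset.univ : Finset σ).finsuppAntidiag d : Set (σ →₀ ℕ)) := by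
    ext m
    simp [Finset.mem_finsuppAntidiag, Finsupp.degree_eq_sum]
  rw [LinearEquiv.finrank_eq ((LinearEquiv.ofEq _ _
      (homogeneousSubmodule_eq_finsupp_supported σ K d)).trans
      (AddMonoidAlgebra.supportedEquivFinsupp _)), hdeg, finrank_finsupp_self]
  simp [Finset.card_finsuppAntidiag_nat_eq_choose]

theorem exists_algHom_map_eq_zero_of_linearIndependent [Fintype σ] {ι : Type*} [Fintype ι]
    {L : ι → MvPolynomial σ K} (hL : ∀ i, L i ∈ homogeneousSubmodule σ K 1)
    (hLI : LinearIndependent K L) :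
    ∃ π : MvPolynomial σ K →ₐ[K] MvPolynomial (Fin (Fintype.card σ - Fintype.card ι)) K,
      (∀ i, π (L i) = 0) ∧
        (homogeneousSubmodule σ K 1).map π.toLinearMap = homogeneousSubmodule _ K 1 := by
  set V := homogeneousSubmodule σ K 1
  set W := homogeneousSubmodule (Fin (Fintype.card σ - Fintype.card ι)) K 1
  let L' : ι → V := fun i => ⟨L i, hL i⟩
  let X' : σ → V := fun j => ⟨X j, isHomogeneous_X K j⟩
  have hL'I : LinearIndependent K L' := LinearIndependent.of_comp V.subtype hLI
  have hX' : span K (Set.range X') = ⊤ := by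
    apply map_injective_of_injective V.injective_subtype
    rw [map_span, ← Set.range_comp, Submodule.map_top, range_subtype]
    exact homogeneousSubmodule_one_eq_span_X.symm
  have hcard : Fintype.card ι ≤ Fintype.card σ := by
    simpa [V, finrank_homogeneousSubmodule] using hL'I.fintype_card_le_finrank
  obtain ⟨f, hf_surj, hf_ker⟩ := (span K (Set.range L')).exists_surjective_le_ker (W := W) (by
    rw [finrank_span_eq_card hL'I, finrank_homogeneousSubmodule, finrank_homogeneousSubmodule]
    simp only [Fintype.card_fin, add_tsub_cancel_right, Nat.choose_one_right]
    omega)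
  let π : MvPolynomial σ K →ₐ[K] MvPolynomial (Fin (Fintype.card σ - Fintype.card ι)) K :=
    aeval fun j => (f (X' j) : MvPolynomial _ K)
  have hπ : π.toLinearMap ∘ₗ V.subtype = W.subtype ∘ₗ f :=
    LinearMap.ext_on_range hX' fun j => by simp [π, X']
  refine ⟨π, fun i => ?_, ?_⟩
  · have hfL : f (L' i) = 0 := hf_ker (subset_span ⟨i, rfl⟩)
    simpa [hfL] using LinearMap.congr_fun hπ (L' i)
  · rw [← range_subtype V, ← LinearMap.range_comp, hπ, LinearMap.range_comp,
      LinearMap.range_eq_top.mpr hf_surj, Submodule.map_top, range_subtype]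

theorem finrank_le_of_le_span_of_linearIndependent [Fintype σ] {ι : Type*} [Fintype ι]
    {L : ι → MvPolynomial σ K} (hL : ∀ i, L i ∈ homogeneousSubmodule σ K 1)
    (hLI : LinearIndependent K L) {d : ℕ} {M : Submodule K (MvPolynomial σ K)}
    (hMd : M ≤ homogeneousSubmodule σ K d)
    (hMI : M ≤ (Ideal.span (Set.range L)).restrictScalars K) :
    finrank K M ≤ (Fintype.card σ + d - 1).choose d -
      (Fintype.card σ - Fintype.card ι + d - 1).choose d := by
  obtain ⟨π, hπL, hπ1⟩ := exists_algHom_map_eq_zero_of_linearIndependent hL hLI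
  have hπd : (homogeneousSubmodule σ K d).map π.toLinearMap = homogeneousSubmodule _ K d := by
    rw [← homogeneousSubmodule_one_pow, Submodule.map_pow, hπ1, homogeneousSubmodule_one_pow]
  have hker : Ideal.span (Set.range L) ≤ RingHom.ker π :=
    Ideal.span_le.mpr <| Set.range_subset_iff.mpr hπL
  have h := finrank_le_finrank_sub_finrank_map π.toLinearMap hMd fun p hp => hker (hMI hp)
  rwa [hπd, finrank_homogeneousSubmodule, finrank_homogeneousSubmodule, Fintype.card_fin] at h

end MvPolynomial

section Wspace

variable {K σ : Type*} [Field K]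

theorem mulSub_le_restrictScalars {G : MvPolynomial σ K} {I : Ideal (MvPolynomial σ K)}
    (hG : G ∈ I) (V : Submodule K (MvPolynomial σ K)) : mulSub G V ≤ I.restrictScalars K :=
  map_le_iff_le_comap.mpr fun _ _ => I.mul_mem_right _ hG

theorem mulSub_homogeneousSubmodule_le {G : MvPolynomial σ K} {a b c : ℕ}
    (hG : G.IsHomogeneous a) (habc : a + b = c) :
    mulSub G (homogeneousSubmodule σ K b) ≤ homogeneousSubmodule σ K c :=
  map_le_iff_le_comap.mpr fun _ hp => habc ▸ hG.mul hp

theorem Wspace_le_restrictScalars {k d : ℕ} (hkd : k + 2 ≤ d) {L F : MvPolynomial σ K}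
    {I : Ideal (MvPolynomial σ K)} (hL : L ∈ I) : Wspace k d L F ≤ I.restrictScalars K :=
  sup_le (mulSub_le_restrictScalars (I.pow_mem_of_mem hL _ (by omega)) _)
    (mulSub_le_restrictScalars (I.mul_mem_right _ (I.pow_mem_of_mem hL _ (by omega))) _)

theorem Wspace_le_homogeneousSubmodule {k d : ℕ} (hkd : k + 1 ≤ d) {L F : MvPolynomial σ K}
    (hL : L.IsHomogeneous 1) (hF : F.IsHomogeneous k) :
    Wspace k d L F ≤ homogeneousSubmodule σ K d :=
  sup_le (mulSub_homogeneousSubmodule_le (hL.pow _) (by omega))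
    (mulSub_homogeneousSubmodule_le ((hL.pow _).mul hF) (by omega))

end Wspace

theorem stmt11_general {K : Type*} [Field K] (n k s d : ℕ)
    (hsn : s ≤ n) (hd1 : k + 2 ≤ d) :
    ∀ L : Fin s → MvPolynomial (Fin (n+1)) K,
      (∀ i, L i ∈ homogeneousSubmodule (Fin (n+1)) K 1) → LinearIndependent K L →
      ∀ F : Fin s → MvPolynomial (Fin (n+1)) K,
        (∀ i, F i ∈ homogeneousSubmodule (Fin (n+1)) K k) →
      (⨆ i : Fin s, Wspace k d (L i) (F i)) ≤
          (Ideal.span (Set.range L)).restrictScalars K ∧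
        Module.finrank K ↥(⨆ i : Fin s, Wspace k d (L i) (F i)) ≤
          (d + n).choose n - (n - s + d).choose d := by
  intro L hL hLI F hF
  have hI : (⨆ i, Wspace k d (L i) (F i)) ≤ (Ideal.span (Set.range L)).restrictScalars K :=
    iSup_le fun i => Wspace_le_restrictScalars hd1 (Ideal.subset_span ⟨i, rfl⟩)
  have hd : (⨆ i, Wspace k d (L i) (F i)) ≤ homogeneousSubmodule (Fin (n+1)) K d :=
    iSup_le fun i => Wspace_le_homogeneousSubmodule (by omega) (hL i) (hF i)
  refine ⟨hI, ?_⟩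
  have h := finrank_le_of_le_span_of_linearIndependent hL hLI hd hI
  rwa [Fintype.card_fin, Fintype.card_fin, show n + 1 + d - 1 = d + n by omega,
    show n + 1 - s + d - 1 = n - s + d by omega, Nat.choose_symm_add] at h

/-- for `2 ≤ s ≤ n`, `k+2 ≤ d ≤ 2k`, when the expected dimension is
`C(d+n,n)` (all of `R_d`), the sum of the `W(L_i,F_i;d)` is contained in the ideal
`(L_1,…,L_s)`, hence has dimension at most `C(d+n,n) − C(n−s+d,d)`: the s-th secant of the
k-th osculating variety is defective with defect at least `C(n−s+d,d)`. -/
theorem stmt11 {K : Type*} [Field K] [CharZero K] (n k s d : ℕ) (hn : 2 ≤ n) (hk : 2 ≤ k)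
    (hs : 2 ≤ s) (hsn : s ≤ n) (hd1 : k + 2 ≤ d) (hd2 : d ≤ 2 * k)
    (hexp : (d + n).choose n ≤ s * ((k + n).choose n + n)) :
    ∀ L : Fin s → MvPolynomial (Fin (n+1)) K,
      (∀ i, L i ∈ homogeneousSubmodule (Fin (n+1)) K 1) → LinearIndependent K L →
      ∀ F : Fin s → MvPolynomial (Fin (n+1)) K,
        (∀ i, F i ∈ homogeneousSubmodule (Fin (n+1)) K k) →
      (⨆ i : Fin s, Wspace k d (L i) (F i)) ≤
          (Ideal.span (Set.range L)).restrictScalars K ∧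
        Module.finrank K ↥(⨆ i : Fin s, Wspace k d (L i) (F i)) ≤
          (d + n).choose n - (n - s + d).choose d :=
  stmt11_general n k s d hsn hd1
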